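/- arXiv:2209.13256 — 2 statements merged into one kernel-verified Lean document; each statement's English description precedes it below -/
import Mathlib

section
/- Let p > 1, A > 0, B > 0 and 0 < t* < ∞. Suppose Φ : [0, t*) → ℝ is differentiable, Φ(t) > 0 for all t ∈ [0, t*), Φ(0) = Φ₀ > 0, Φ'(t) ≤ 2AΦ(t)^p + BΦ(t) for all t ∈ [0, t*), and Φ(t) → +∞ as t → t*⁻. Then t* ≥ T, where T = (1/(B(p−1))) · ln(1 + (B/(2A)) · Φ₀^{1−p}). -/
open Filter Set

/-!
The Bernoulli substitution `u = Φ ^ (1 - p)` turns `Φ' ≤ 2AΦ^p + BΦ` into the linear inequality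
`(u + 2A/B)' ≥ -(p - 1) B (u + 2A/B)`, so `exp ((p - 1) B t) (u t + 2A/B)` is nondecreasing.
As `Φ → ∞` at `t*`, `u → 0`, and comparing the value `Φ₀ ^ (1 - p) + 2A/B` at `0` with the limit
`exp ((p - 1) B t*) · 2A/B` at `t*` is exactly `t* ≥ T`.
-/

theorem monotoneOn_exp_mul_of_neg_mul_le_deriv {D : Set ℝ} (hD : Convex ℝ D) {k : ℝ}
    {f f' : ℝ → ℝ} (hf : ∀ t ∈ D, HasDerivAt f (f' t) t) (hf' : ∀ t ∈ D, -k * f t ≤ f' t) :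
    MonotoneOn (fun t => Real.exp (k * t) * f t) D := by
  have hderiv : ∀ t ∈ D, HasDerivAt (fun t => Real.exp (k * t) * f t)
      (Real.exp (k * t) * (k * f t + f' t)) t := fun t ht => by
    have hexp : HasDerivAt (fun t => Real.exp (k * t)) (Real.exp (k * t) * k) t := by
      simpa using ((hasDerivAt_id t).const_mul k).exp
    exact (hexp.mul (hf t ht)).congr_deriv (by ring)
  refine monotoneOn_of_hasDerivWithinAt_nonneg hD
    (fun t ht => (hderiv t ht).continuousAt.continuousWithinAt)
    (fun t ht => (hderiv t (interior_subset ht)).hasDerivWithinAt) fun t ht =>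
    mul_nonneg (Real.exp_pos _).le (by linarith [hf' t (interior_subset ht)])

theorem MonotoneOn.le_of_tendsto_nhdsLT {α β : Type*} [LinearOrder α] [TopologicalSpace α]
    [OrderTopology α] [DenselyOrdered α] [Preorder β] [TopologicalSpace β]
    [ClosedIciTopology β] {f : α → β} {a b : α} {L : β} (hab : a < b) (hf : MonotoneOn f (Ico a b))
    (hL : Tendsto f (nhdsWithin b (Iio b)) (nhds L)) : f a ≤ L :=
  have := nhdsLT_neBot_of_exists_lt ⟨a, hab⟩
  ge_of_tendsto hL <| eventually_of_mem (Ioo_mem_nhdsLT_of_mem ⟨hab, le_rfl⟩) fun _ ht =>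
    hf (left_mem_Ico.2 hab) (Ioo_subset_Ico_self ht) ht.1.le

theorem le_deriv_rpow_one_sub_of_le {p A B x x' : ℝ} (hp : 1 ≤ p) (hB : B ≠ 0) (hx : 0 < x)
    (h : x' ≤ 2 * A * x ^ p + B * x) :
    -((p - 1) * B) * (x ^ (1 - p) + 2 * A / B) ≤ x' * (1 - p) * x ^ (1 - p - 1) := by
  have hpow : x ^ (1 - p - 1) * x ^ p = 1 := by
    rw [← Real.rpow_add hx]; norm_num
  have hpow' : x ^ (1 - p - 1) * x = x ^ (1 - p) := by
    rw [← Real.rpow_add_one hx.ne']; ring_nf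
  have hscale : 0 ≤ (p - 1) * x ^ (1 - p - 1) := mul_nonneg (by linarith) (by positivity)
  calc -((p - 1) * B) * (x ^ (1 - p) + 2 * A / B)
      = -((p - 1) * x ^ (1 - p - 1)) * (2 * A * x ^ p + B * x) := by
        rw [← hpow']; field_simp; linear_combination (p - 1) * 2 * A * hpow
    _ ≤ -((p - 1) * x ^ (1 - p - 1)) * x' := mul_le_mul_of_nonpos_left h (by linarith)
    _ = x' * (1 - p) * x ^ (1 - p - 1) := by ring

theorem monotoneOn_exp_mul_rpow_one_sub_add {D : Set ℝ} (hD : Convex ℝ D) {p A B : ℝ}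
    {Φ Φ' : ℝ → ℝ} (hp : 1 ≤ p) (hB : B ≠ 0) (hdiff : ∀ t ∈ D, HasDerivAt Φ (Φ' t) t)
    (hpos : ∀ t ∈ D, 0 < Φ t) (hineq : ∀ t ∈ D, Φ' t ≤ 2 * A * Φ t ^ p + B * Φ t) :
    MonotoneOn (fun t => Real.exp ((p - 1) * B * t) * (Φ t ^ (1 - p) + 2 * A / B)) D :=
  monotoneOn_exp_mul_of_neg_mul_le_deriv hD
    (fun t ht => ((hdiff t ht).rpow_const (Or.inl (hpos t ht).ne')).add_const _)
    fun t ht => le_deriv_rpow_one_sub_of_le hp hB (hpos t ht) (hineq t ht)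

/-- ODE core of Theorem 1 (lower bound for the blow-up time): a positive differentiable
function satisfying `Φ' ≤ 2AΦ^p + BΦ` with `p > 1` which blows up at time `t*` satisfies
`t* ≥ T := (1/(B(p−1))) log(1 + (B/(2A)) Φ₀^{1−p})`. -/
theorem stmt_0 (p A B tstar Φ₀ T : ℝ) (Φ Φ' : ℝ → ℝ)
    (hp : 1 < p) (hA : 0 < A) (hB : 0 < B) (htstar : 0 < tstar)
    (hdiff : ∀ t ∈ Ico (0 : ℝ) tstar, HasDerivAt Φ (Φ' t) t)
    (hpos : ∀ t ∈ Ico (0 : ℝ) tstar, 0 < Φ t)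
    (hΦ₀ : Φ 0 = Φ₀) (hΦ₀pos : 0 < Φ₀)
    (hineq : ∀ t ∈ Ico (0 : ℝ) tstar, Φ' t ≤ 2 * A * Φ t ^ p + B * Φ t)
    (hblow : Tendsto Φ (nhdsWithin tstar (Iio tstar)) atTop)
    (hT : T = 1 / (B * (p - 1)) * Real.log (1 + B / (2 * A) * Φ₀ ^ (1 - p))) :
    T ≤ tstar := by
  have hmono := monotoneOn_exp_mul_rpow_one_sub_add (convex_Ico 0 tstar) hp.le hB.ne'
    hdiff hpos hineq
  have hvanish : Tendsto (fun t => Φ t ^ (1 - p)) (nhdsWithin tstar (Iio tstar)) (nhds 0) := by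
    simpa only [neg_sub, Function.comp_def] using
      (tendsto_rpow_neg_atTop (sub_pos.2 hp)).comp hblow
  have hexp := ((Real.continuous_exp.comp (continuous_const_mul ((p - 1) * B))).tendsto
    tstar).mono_left (nhdsWithin_le_nhds (s := Iio tstar))
  have hle := hmono.le_of_tendsto_nhdsLT htstar (hexp.mul (hvanish.add_const (2 * A / B)))
  simp only [mul_zero, Real.exp_zero, one_mul, zero_add, hΦ₀, Function.comp_apply] at hle
  have hlog : Real.log (1 + B / (2 * A) * Φ₀ ^ (1 - p)) ≤ (p - 1) * B * tstar := by
    rw [Real.log_le_iff_le_exp (by positivity)]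
    calc 1 + B / (2 * A) * Φ₀ ^ (1 - p) = (Φ₀ ^ (1 - p) + 2 * A / B) * (B / (2 * A)) := by
          field_simp; ring
      _ ≤ Real.exp ((p - 1) * B * tstar) * (2 * A / B) * (B / (2 * A)) := by gcongr
      _ = Real.exp ((p - 1) * B * tstar) := by field_simp
  rw [hT, one_div_mul_eq_div, div_le_iff₀ (mul_pos hB (sub_pos.2 hp))]
  linarith
end

section
/- Let q > 1 and κ, c, Q > 0 be real constants, and define H : [0, ∞) → ℝ by H(η) = −κη + 2^{1−q} c η^q − cQ. Let 0 < T ≤ ∞ and let Ψ : [0, T) → ℝ be differentiable with Ψ(0) = Ψ₀ ≥ 0, H(Ψ₀) > 0, and Ψ'(t) ≥ H(Ψ(t)) for all t ∈ [0, T). Then Ψ is strictly increasing on [0, T) and T ≤ ∫_{Ψ₀}^{∞} dη / H(η). In particular, if Ψ is a maximal solution with finite blow-up time t* (i.e. Ψ(t) → ∞ as t → t*⁻), then t* ≤ ∫_{Ψ₀}^{∞} dη / H(η). -/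
open Set MeasureTheory Filter Topology

lemma aux_tangent {x y q : ℝ} (hx : 0 < x) (hxy : x ≤ y) (hq : 1 ≤ q) :
    x ^ q + q * x ^ (q - 1) * (y - x) ≤ y ^ q := by
  have hs : -1 ≤ (y - x) / x := le_trans (by norm_num) (div_nonneg (by linarith) hx.le)
  have h := one_add_mul_self_le_rpow_one_add hs hq
  have h1 : (1 + (y - x) / x) = y / x := by field_simp; ring
  rw [h1, Real.div_rpow (by linarith) hx.le] at h
  have hxq : 0 < x ^ q := Real.rpow_pos_of_pos hx q
  have h2 : x ^ (q - 1) = x ^ q / x := by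
    rw [Real.rpow_sub hx, Real.rpow_one]
  have h3 : x ^ q + q * x ^ (q - 1) * (y - x) = x ^ q * (1 + q * ((y - x) / x)) := by
    rw [h2]; field_simp
  rw [h3]
  calc x ^ q * (1 + q * ((y - x) / x)) ≤ x ^ q * (y ^ q / x ^ q) :=
        mul_le_mul_of_nonneg_left h hxq.le
    _ = y ^ q := by field_simp

/-- ODE core of Theorem 2 (blow-up and upper bound for the blow-up time): with
`H(η) = −κη + 2^{1−q} c η^q − cQ` (`q > 1`, `κ, c, Q > 0`), if `Ψ` is differentiable on
`[0, T)` (`T ≤ ∞`, modelled by `T : EReal`) with `Ψ(0) = Ψ₀ ≥ 0`, `H(Ψ₀) > 0` and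
`Ψ' ≥ H(Ψ)`, then `Ψ` is strictly increasing on `[0, T)` and
`T ≤ ∫_{Ψ₀}^{∞} dη/H(η)`. -/
theorem stmt_8 (q κ c Q : ℝ) (hq : 1 < q) (hκ : 0 < κ) (hc : 0 < c) (hQ : 0 < Q)
    (H : ℝ → ℝ) (hH : ∀ η : ℝ, H η = -κ * η + 2 ^ (1 - q) * c * η ^ q - c * Q)
    (T : EReal) (hT : 0 < T) (Ψ Ψ' : ℝ → ℝ) (Ψ₀ : ℝ)
    (hdiff : ∀ t : ℝ, 0 ≤ t → (t : EReal) < T → HasDerivAt Ψ (Ψ' t) t)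
    (hΨ₀ : Ψ 0 = Ψ₀) (hΨ₀nonneg : 0 ≤ Ψ₀) (hH₀ : 0 < H Ψ₀)
    (hineq : ∀ t : ℝ, 0 ≤ t → (t : EReal) < T → H (Ψ t) ≤ Ψ' t) :
    StrictMonoOn Ψ {t : ℝ | 0 ≤ t ∧ (t : EReal) < T} ∧
      T ≤ ((∫ η in Ici Ψ₀, 1 / H η : ℝ) : EReal) := by
  set a : ℝ := 2 ^ (1 - q) * c with ha_def
  have ha : 0 < a := mul_pos (Real.rpow_pos_of_pos two_pos _) hc
  -- Ψ₀ > 0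
  have hΨ₀pos : 0 < Ψ₀ := by
    rcases hΨ₀nonneg.lt_or_eq with h | h
    · exact h
    · exfalso
      have h0 := hH₀
      rw [← h, hH] at h0
      rw [Real.zero_rpow (by linarith : q ≠ 0)] at h0
      nlinarith
  -- κ < a * Ψ₀ ^ (q - 1)
  have hκ' : κ < a * Ψ₀ ^ (q - 1) := by
    have h0 := hH₀
    rw [hH] at h0
    have hsp : Ψ₀ ^ q = Ψ₀ ^ (q - 1) * Ψ₀ := by
      rw [← Real.rpow_add_one (ne_of_gt hΨ₀pos)]; ring_nf
    rw [hsp] at h0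
    nlinarith [hΨ₀pos, hQ, hc]
  -- H monotone on [Ψ₀, ∞)
  have hHmono : ∀ x y : ℝ, Ψ₀ ≤ x → x ≤ y → H x ≤ H y := by
    intro x y hx hxy
    have hxpos : 0 < x := lt_of_lt_of_le hΨ₀pos hx
    have ht := aux_tangent hxpos hxy hq.le
    have hx1 : Ψ₀ ^ (q - 1) ≤ x ^ (q - 1) :=
      Real.rpow_le_rpow hΨ₀pos.le hx (by linarith)
    have hx1' : (0:ℝ) ≤ x ^ (q - 1) := Real.rpow_nonneg hxpos.le _
    rw [hH, hH]
    have h1 : a * (x ^ q + q * x ^ (q - 1) * (y - x)) ≤ a * y ^ q :=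
      mul_le_mul_of_nonneg_left ht ha.le
    have h2 : Ψ₀ ^ (q - 1) * (y - x) ≤ x ^ (q - 1) * (y - x) :=
      mul_le_mul_of_nonneg_right hx1 (by linarith)
    have h3 : (0:ℝ) ≤ (q - 1) * (a * (x ^ (q - 1) * (y - x))) := by
      have : (0:ℝ) ≤ x ^ (q - 1) * (y - x) := mul_nonneg hx1' (by linarith)
      exact mul_nonneg (by linarith) (mul_nonneg ha.le this)
    have h4 : κ * (y - x) ≤ a * Ψ₀ ^ (q - 1) * (y - x) :=
      mul_le_mul_of_nonneg_right hκ'.le (by linarith)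
    nlinarith
  have hHpos : ∀ x : ℝ, Ψ₀ ≤ x → 0 < H x := fun x hx =>
    lt_of_lt_of_le hH₀ (hHmono _ _ le_rfl hx)
  have hHcont : Continuous H := by
    have hr : Continuous fun η : ℝ => η ^ q := Real.continuous_rpow_const (by linarith)
    have : H = fun η : ℝ => -κ * η + a * η ^ q - c * Q := funext hH
    rw [this]
    exact (((continuous_const.mul continuous_id).add (continuous_const.mul hr)).sub
      continuous_const)
  -- invariance: Ψ stays ≥ Ψ₀
  have key : ∀ t : ℝ, 0 ≤ t → (t : EReal) < T → Ψ₀ ≤ Ψ t := by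
    intro t₀ ht₀0 ht₀T
    set A : Set ℝ := {s | s ∈ Icc (0:ℝ) t₀ ∧ ∀ u ∈ Icc (0:ℝ) s, Ψ₀ ≤ Ψ u} with hA
    have hA0 : (0:ℝ) ∈ A := by
      refine ⟨⟨le_rfl, ht₀0⟩, fun u hu => ?_⟩
      have : u = 0 := le_antisymm hu.2 hu.1
      rw [this, hΨ₀]
    have hAne : A.Nonempty := ⟨0, hA0⟩
    have hAbdd : BddAbove A := ⟨t₀, fun s hs => hs.1.2⟩
    set m := sSup A with hm_def
    have hm0 : 0 ≤ m := le_csSup hAbdd hA0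
    have hmt₀ : m ≤ t₀ := csSup_le hAne fun s hs => hs.1.2
    have hmT : (m : EReal) < T := lt_of_le_of_lt (EReal.coe_le_coe_iff.2 hmt₀) ht₀T
    have hlt : ∀ u : ℝ, 0 ≤ u → u < m → Ψ₀ ≤ Ψ u := by
      intro u hu0 hum
      obtain ⟨s, hsA, hus⟩ := exists_lt_of_lt_csSup hAne hum
      exact hsA.2 u ⟨hu0, hus.le⟩
    have hΨm : Ψ₀ ≤ Ψ m := by
      rcases hm0.lt_or_eq with h | h
      · have hctu : ContinuousAt Ψ m := (hdiff m hm0 hmT).continuousAt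
        have htd : Tendsto Ψ (𝓝[<] m) (𝓝 (Ψ m)) :=
          hctu.continuousWithinAt.tendsto
        refine ge_of_tendsto htd ?_
        filter_upwards [Ioo_mem_nhdsLT_of_mem (⟨h, le_rfl⟩ : m ∈ Ioc 0 m)] with u hu
        exact hlt u hu.1.le hu.2
      · rw [← h, hΨ₀]
    have hmA : m ∈ A := by
      refine ⟨⟨hm0, hmt₀⟩, fun u hu => ?_⟩
      rcases hu.2.lt_or_eq with h | h
      · exact hlt u hu.1 h
      · rw [h]; exact hΨm
    rcases hmt₀.lt_or_eq with hlt₀ | heq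
    · exfalso
      have hΨ'm : H Ψ₀ ≤ Ψ' m :=
        le_trans (hHmono _ _ le_rfl hΨm) (hineq m hm0 hmT)
      have hslope : Tendsto (slope Ψ m) (𝓝[≠] m) (𝓝 (Ψ' m)) :=
        hasDerivAt_iff_tendsto_slope.1 (hdiff m hm0 hmT)
      have hev : ∀ᶠ u in 𝓝[≠] m, 0 < slope Ψ m u :=
        hslope.eventually (eventually_gt_nhds (lt_of_lt_of_le hH₀ hΨ'm))
      have hev' : ∀ᶠ u in 𝓝[>] m, 0 < slope Ψ m u :=
        hev.filter_mono (nhdsWithin_mono m fun x hx => ne_of_gt hx)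
      obtain ⟨u', hu'm, hu'⟩ := mem_nhdsGT_iff_exists_Ioc_subset.1 hev'
      set w := min u' t₀ with hw_def
      have hmw : m < w := lt_min hu'm hlt₀
      have hwA : w ∈ A := by
        refine ⟨⟨le_trans hm0 hmw.le, min_le_right _ _⟩, fun u hu => ?_⟩
        rcases le_or_gt u m with h | h
        · exact hmA.2 u ⟨hu.1, h⟩
        · have husl : 0 < slope Ψ m u := hu' ⟨h, le_trans hu.2 (min_le_left _ _)⟩
          rw [slope_def_field] at husl
          have : 0 < Ψ u - Ψ m := by
            have hum : 0 < u - m := sub_pos.2 h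
            exact (div_pos_iff.1 husl).resolve_right (fun hh => absurd hh.2 (by linarith)) |>.1
          linarith [hΨm]
      have : w ≤ m := le_csSup hAbdd hwA
      exact absurd this (not_le.2 hmw)
    · rw [← heq]; exact hΨm
  -- positivity of Ψ'
  have hΨ'pos : ∀ t : ℝ, 0 ≤ t → (t : EReal) < T → 0 < Ψ' t := fun t h1 h2 =>
    lt_of_lt_of_le (hHpos _ (key t h1 h2)) (hineq t h1 h2)
  -- the set S
  set S : Set ℝ := {t : ℝ | 0 ≤ t ∧ (t : EReal) < T} with hS
  have hSconv : Convex ℝ S := by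
    refine Set.OrdConnected.convex ⟨fun x hx y hy z hz => ⟨le_trans hx.1 hz.1, ?_⟩⟩
    exact lt_of_le_of_lt (EReal.coe_le_coe_iff.2 hz.2) hy.2
  have hmono : StrictMonoOn Ψ S := by
    refine strictMonoOn_of_deriv_pos hSconv (fun t ht => (hdiff t ht.1 ht.2).continuousAt.continuousWithinAt) ?_
    intro x hx
    have hxS := interior_subset hx
    rw [(hdiff x hxS.1 hxS.2).deriv]
    exact hΨ'pos x hxS.1 hxS.2
  refine ⟨hmono, ?_⟩
  set f : ℝ → ℝ := fun η => 1 / H η with hf_def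
  have hfm : Measurable f := by
    simpa [hf_def, one_div] using hHcont.measurable
  -- a cushion below Ψ₀ where H is still positive
  have hδ : ∀ᶠ x in 𝓝 Ψ₀, 0 < H x := hHcont.continuousAt.eventually (eventually_gt_nhds hH₀)
  obtain ⟨δ, hδpos, hδball⟩ := Metric.eventually_nhds_iff_ball.1 hδ
  set b : ℝ := Ψ₀ - δ / 2 with hb_def
  have hbΨ₀ : b < Ψ₀ := by rw [hb_def]; linarith
  have hHpos2 : ∀ x : ℝ, b ≤ x → 0 < H x := by
    intro x hx
    rcases le_or_gt Ψ₀ x with h | h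
    · exact hHpos x h
    · apply hδball
      rw [Metric.mem_ball, Real.dist_eq, abs_lt]
      constructor <;> [skip; linarith]
      rw [hb_def] at hx; linarith
  -- eventual lower bound H η ≥ (a/2) η^q
  have htR : Tendsto (fun η : ℝ => η * (a / 2 * η ^ (q - 1) + -κ)) atTop atTop := by
    apply Tendsto.atTop_mul_atTop₀ tendsto_id
    apply tendsto_atTop_add_const_right
    exact (tendsto_rpow_atTop (by linarith)).const_mul_atTop (by positivity)
  have hev2 : ∀ᶠ η in atTop, a / 2 * η ^ q ≤ H η := by
    filter_upwards [eventually_gt_atTop 0, htR.eventually_ge_atTop (c * Q)] with η h1 h2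
    rw [hH]
    have h3 : η ^ (q - 1) * η = η ^ q := by
      rw [← Real.rpow_add_one (ne_of_gt h1)]; ring_nf
    nlinarith [h2, h3]
  obtain ⟨R₀, hR₀⟩ := eventually_atTop.1 hev2
  set R : ℝ := max R₀ Ψ₀ with hR_def
  have hRΨ₀ : Ψ₀ ≤ R := le_max_right _ _
  have hRpos : 0 < R := lt_of_lt_of_le hΨ₀pos hRΨ₀
  -- integrability on (R, ∞)
  have hIoi : IntegrableOn f (Ioi R) := by
    have hg : IntegrableOn (fun η : ℝ => 2 / a * η ^ (-q)) (Ioi R) :=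
      (integrableOn_Ioi_rpow_of_lt (by linarith) hRpos).const_mul _
    refine hg.integrable.mono' hfm.aestronglyMeasurable ?_
    filter_upwards [ae_restrict_mem measurableSet_Ioi] with η hη
    have hηR : R < η := hη
    have hηΨ₀ : Ψ₀ ≤ η := le_trans hRΨ₀ hηR.le
    have hηpos : 0 < η := lt_trans hRpos hηR
    have hηq : 0 < η ^ q := Real.rpow_pos_of_pos hηpos q
    have hHb : a / 2 * η ^ q ≤ H η := hR₀ η (le_trans (le_max_left _ _) hηR.le)
    have hHp : 0 < H η := hHpos η hηΨ₀
    have h5 : 0 < a / 2 * η ^ q := by positivity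
    have h6 : f η ≤ 1 / (a / 2 * η ^ q) := one_div_le_one_div_of_le h5 hHb
    have h7 : (1:ℝ) / (a / 2 * η ^ q) = 2 / a * η ^ (-q) := by
      rw [Real.rpow_neg hηpos.le]
      field_simp
    rw [Real.norm_eq_abs, abs_of_pos (by positivity : 0 < f η)]
    rw [← h7]
    exact h6
  -- integrability on [b, R]
  have hIcc : IntegrableOn f (Icc b R) := by
    apply ContinuousOn.integrableOn_compact isCompact_Icc
    exact continuousOn_const.div hHcont.continuousOn fun x hx => (hHpos2 x hx.1).ne'
  have hIntb : IntegrableOn f (Ici b) := by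
    refine (hIcc.union hIoi).mono_set fun x hx => ?_
    rcases le_or_gt x R with h | h
    · exact Or.inl ⟨hx, h⟩
    · exact Or.inr h
  have hInt : IntegrableOn f (Ici Ψ₀) := hIntb.mono_set (Ici_subset_Ici.2 hbΨ₀.le)
  have hfnonneg : ∀ x : ℝ, Ψ₀ ≤ x → 0 ≤ f x := fun x hx =>
    le_of_lt (div_pos one_pos (hHpos x hx))
  set I : ℝ := ∫ η in Ici Ψ₀, f η with hI_def
  have hIpos : 0 ≤ I :=
    setIntegral_nonneg measurableSet_Ici hfnonneg
  -- FTC derivative of the primitive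
  set G : ℝ → ℝ := fun u => ∫ η in Ψ₀..u, f η with hG_def
  have hG : ∀ x : ℝ, Ψ₀ ≤ x → HasDerivAt G (f x) x := by
    intro x hx
    refine intervalIntegral.integral_hasDerivAt_right ?_
      ⟨univ, univ_mem, hfm.aestronglyMeasurable.restrict⟩ ?_
    · refine (hInt.mono_set ?_).intervalIntegrable
      rw [uIcc_of_le hx]
      exact Icc_subset_Ici_self
    · exact continuousAt_const.div hHcont.continuousAt (hHpos x hx).ne'
  -- t ≤ I for all t in [0, T)
  have hkey2 : ∀ t₀ : ℝ, 0 ≤ t₀ → (t₀ : EReal) < T → t₀ ≤ I := by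
    intro t₀ ht0 htT
    set F : ℝ → ℝ := fun t => G (Ψ t) - t with hF_def
    have hFd : ∀ t : ℝ, 0 ≤ t → (t : EReal) < T →
        HasDerivAt F (f (Ψ t) * Ψ' t - 1) t := by
      intro t h1 h2
      exact ((hG (Ψ t) (key t h1 h2)).comp t (hdiff t h1 h2)).sub (hasDerivAt_id t)
    have hmem : ∀ t ∈ Icc (0:ℝ) t₀, 0 ≤ t ∧ (t : EReal) < T := fun t ht =>
      ⟨ht.1, lt_of_le_of_lt (EReal.coe_le_coe_iff.2 ht.2) htT⟩
    have hFc : ContinuousOn F (Icc 0 t₀) := fun t ht =>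
      (hFd t (hmem t ht).1 (hmem t ht).2).continuousAt.continuousWithinAt
    have hFd' : DifferentiableOn ℝ F (interior (Icc 0 t₀)) := by
      intro x hx
      have hx' := interior_subset hx
      exact ((hFd x (hmem x hx').1 (hmem x hx').2).differentiableAt).differentiableWithinAt
    have hF' : ∀ x ∈ interior (Icc 0 t₀), 0 ≤ deriv F x := by
      intro x hx
      have hx' := interior_subset hx
      have hd := hFd x (hmem x hx').1 (hmem x hx').2
      rw [hd.deriv]
      have hHp : 0 < H (Ψ x) := hHpos _ (key x (hmem x hx').1 (hmem x hx').2)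
      have hi := hineq x (hmem x hx').1 (hmem x hx').2
      have h8 : 1 ≤ f (Ψ x) * Ψ' x := by
        show (1:ℝ) ≤ 1 / H (Ψ x) * Ψ' x
        rw [one_div, inv_mul_eq_div]
        exact (one_le_div hHp).2 hi
      linarith
    have hmonoF := monotoneOn_of_deriv_nonneg (convex_Icc 0 t₀) hFc hFd' hF'
    have h0t : F 0 ≤ F t₀ := hmonoF ⟨le_rfl, ht0⟩ ⟨ht0, le_rfl⟩ ht0
    have hF0 : F 0 = 0 := by
      rw [hF_def]
      simp [hG_def, hΨ₀]
    have h1 : t₀ ≤ G (Ψ t₀) := by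
      rw [hF0] at h0t
      have h0t' : (0:ℝ) ≤ G (Ψ t₀) - t₀ := h0t
      linarith
    have h2 : G (Ψ t₀) ≤ I := by
      have hx := key t₀ ht0 htT
      rw [hG_def]
      show (∫ η in Ψ₀..Ψ t₀, f η) ≤ I
      rw [intervalIntegral.integral_of_le hx]
      refine setIntegral_mono_set hInt ?_ ?_
      · filter_upwards [ae_restrict_mem measurableSet_Ici] with x hx2
        exact hfnonneg x hx2
      · exact HasSubset.Subset.eventuallyLE (fun x hx => le_of_lt hx.1)
    linarith
  -- conclude in EReal
  rw [← EReal.le_of_forall_lt_iff_le]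
  intro z hz
  by_contra hcon
  push_neg at hcon
  have hzI : I < z := EReal.coe_lt_coe_iff.1 hz
  have hz0 : (0:ℝ) ≤ z := le_of_lt (lt_of_le_of_lt hIpos hzI)
  exact absurd (hkey2 z hz0 hcon) (not_le.2 hzI)
end
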